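/- Let R be a finite Frobenius ring with generating character χ, let 𝒰 be a subgroup of GL(n,R), let C ⊆ R^n be a code, and let f : C → R^n be a local 𝒰-map. Then: (1) for every orbit Q of the left action x ↦ (U x^T)^T of 𝒰 on R^n, one has ∑_{y∈Q} χ(⟨f(x),y⟩) = ∑_{y∈Q} χ(⟨x,y⟩) for all x ∈ C; and (2) for every z ∈ R^n there exists a matrix A_z ∈ 𝒰 such that ⟨f(x),z⟩ = x A_z z^T for all x ∈ C. -/
import Mathlib


open Matrix
open scoped Classical

noncomputable section

/-- `χ` is a generating character of the finite ring `R`. -/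
def IsGeneratingChar {R : Type*} [Ring R] [Fintype R] (χ : AddChar R ℂ) : Prop :=
  ∀ ψ : AddChar R ℂ, ∃! r : R, ∀ x : R, ψ x = χ (x * r)

variable {R : Type*} [Ring R] [Fintype R] {n : ℕ}

/-- The sum `∑_{w ∈ S} χ ⟨v, w⟩`. -/
def sumR (χ : AddChar R ℂ) (S : Set (Fin n → R)) (v : Fin n → R) : ℂ :=
  ∑ w ∈ S.toFinite.toFinset, χ (v ⬝ᵥ w)

/-- The orbit of `v` under the left action `x ↦ (U xᵀ)ᵀ` of the subgroup `𝒰` of `GL(n,R)`. -/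
def leftOrbit (𝒰 : Subgroup (Matrix (Fin n) (Fin n) R)ˣ) (v : Fin n → R) :
    Set (Fin n → R) :=
  {w | ∃ U ∈ 𝒰, w = U.val *ᵥ v}

/-- Let `R` be a finite Frobenius ring with generating character `χ`, `𝒰 ≤ GL(n,R)` a
subgroup, `C ⊆ R^n` a code and `f : C → R^n` a local `𝒰`-map.  Then
(1) for every orbit `Q` of the left action of `𝒰` on `R^n`,
`∑_{y∈Q} χ⟨f(x),y⟩ = ∑_{y∈Q} χ⟨x,y⟩` for all `x ∈ C`; and
(2) for every `z ∈ R^n` there is `A_z ∈ 𝒰` with `⟨f(x),z⟩ = x A_z zᵀ` for all `x ∈ C`. -/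
theorem local_map_charSums_and_pointwise_matrices
    (χ : AddChar R ℂ) (hχ : IsGeneratingChar χ)
    (𝒰 : Subgroup (Matrix (Fin n) (Fin n) R)ˣ)
    (C : Submodule R (Fin n → R)) (f : C →ₗ[R] (Fin n → R))
    (hf : ∀ x : C, ∃ M ∈ 𝒰, f x = (x : Fin n → R) ᵥ* M.val) :
    (∀ u : Fin n → R, ∀ x : C,
      sumR χ (leftOrbit 𝒰 u) (f x) = sumR χ (leftOrbit 𝒰 u) (x : Fin n → R)) ∧
    (∀ z : Fin n → R, ∃ A ∈ 𝒰, ∀ x : C,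
      f x ⬝ᵥ z = ((x : Fin n → R) ᵥ* A.val) ⬝ᵥ z) := by

  classical
  -- Part 1
  have part1 : ∀ u : Fin n → R, ∀ x : C,
      sumR χ (leftOrbit 𝒰 u) (f x) = sumR χ (leftOrbit 𝒰 u) (x : Fin n → R) := by
    intro u x
    obtain ⟨M, hM, hfx⟩ := hf x
    unfold sumR
    rw [hfx]
    refine Finset.sum_nbij' (fun y => M.val *ᵥ y) (fun y => (M⁻¹).val *ᵥ y) ?_ ?_ ?_ ?_ ?_
    · intro y hy
      rw [Set.Finite.mem_toFinset] at hy ⊢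
      obtain ⟨U, hU, rfl⟩ := hy
      exact ⟨M * U, 𝒰.mul_mem hM hU, by
        simp only [Matrix.mulVec_mulVec, Units.val_mul]⟩
    · intro y hy
      rw [Set.Finite.mem_toFinset] at hy ⊢
      obtain ⟨U, hU, rfl⟩ := hy
      exact ⟨M⁻¹ * U, 𝒰.mul_mem (𝒰.inv_mem hM) hU, by
        simp only [Matrix.mulVec_mulVec, Units.val_mul]⟩
    · intro y _
      simp only [Matrix.mulVec_mulVec, ← Units.val_mul, inv_mul_cancel, Units.val_one,
        Matrix.one_mulVec]
    · intro y _
      simp only [Matrix.mulVec_mulVec, ← Units.val_mul, mul_inv_cancel, Units.val_one,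
        Matrix.one_mulVec]
    · intro y _
      exact (congrArg χ (Matrix.dotProduct_mulVec _ _ _)).symm
  refine ⟨part1, ?_⟩
  -- Part 2
  intro z
  set Q : Set (Fin n → R) := leftOrbit 𝒰 z with hQ
  set T : Finset (Fin n → R) := Q.toFinite.toFinset with hTdef
  have hzT : z ∈ T := by
    rw [hTdef, Set.Finite.mem_toFinset]
    exact ⟨1, 𝒰.one_mem, by rw [Units.val_one, Matrix.one_mulVec]⟩
  -- the characters
  let Ψ : (Fin n → R) → (Multiplicative C →* ℂ) := fun y =>
    { toFun := fun x => χ ((f x.toAdd : Fin n → R) ⬝ᵥ y)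
      map_one' := by
        simp only [toAdd_one, map_zero, zero_dotProduct, AddChar.map_zero_eq_one]
      map_mul' := by
        intro a b
        simp only [toAdd_mul, map_add, add_dotProduct, AddChar.map_add_eq_mul] }
  let Φ : (Fin n → R) → (Multiplicative C →* ℂ) := fun y =>
    { toFun := fun x => χ ((x.toAdd : Fin n → R) ⬝ᵥ y)
      map_one' := by
        simp only [toAdd_one, Submodule.coe_zero, zero_dotProduct,
          AddChar.map_zero_eq_one]
      map_mul' := by
        intro a b
        simp only [toAdd_mul, Submodule.coe_add, add_dotProduct,
          AddChar.map_add_eq_mul] }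
  have hsum : ∀ x : Multiplicative C, ∑ y ∈ T, Ψ y x = ∑ y ∈ T, Φ y x := by
    intro x
    exact part1 z x.toAdd
  -- linear independence of characters
  have li := linearIndependent_monoidHom (Multiplicative C) ℂ
  set g : (Multiplicative C →* ℂ) →₀ ℂ :=
    (∑ y ∈ T, Finsupp.single (Ψ y) (1:ℂ)) - ∑ y ∈ T, Finsupp.single (Φ y) (1:ℂ) with hgdef
  have htot : Finsupp.linearCombination ℂ
      (fun f : Multiplicative C →* ℂ => (f : Multiplicative C → ℂ)) g = 0 := by
    rw [hgdef, map_sub, map_sum, map_sum]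
    simp only [Finsupp.linearCombination_single, one_smul]
    funext x
    simp only [Pi.sub_apply, Finset.sum_apply, Pi.zero_apply, sub_eq_zero]
    exact hsum x
  have hg0 : g = 0 := linearIndependent_iff.mp li g htot
  have hcard : ((T.filter (fun y => Ψ y = Ψ z)).card : ℂ)
      = ((T.filter (fun y => Φ y = Ψ z)).card : ℂ) := by
    have := DFunLike.congr_fun hg0 (Ψ z)
    rw [hgdef] at this
    simp only [Finsupp.sub_apply, Finsupp.coe_zero, Pi.zero_apply, sub_eq_zero,
      Finsupp.finset_sum_apply, Finsupp.single_apply] at this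
    rw [Finset.sum_boole, Finset.sum_boole] at this
    exact this
  have hcardnat : (T.filter (fun y => Ψ y = Ψ z)).card
      = (T.filter (fun y => Φ y = Ψ z)).card := Nat.cast_injective hcard
  have hpos : 0 < (T.filter (fun y => Φ y = Ψ z)).card := by
    rw [← hcardnat]
    exact Finset.card_pos.mpr ⟨z, Finset.mem_filter.mpr ⟨hzT, rfl⟩⟩
  obtain ⟨y₀, hy₀⟩ := Finset.card_pos.mp hpos
  rw [Finset.mem_filter] at hy₀
  obtain ⟨hy₀T, hΦΨ⟩ := hy₀
  rw [hTdef, Set.Finite.mem_toFinset] at hy₀T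
  obtain ⟨A, hA, rfl⟩ := hy₀T
  refine ⟨A, hA, ?_⟩
  intro x
  have hchar : ∀ r : R, χ (r * ((x : Fin n → R) ⬝ᵥ (A.val *ᵥ z)))
      = χ (r * (f x ⬝ᵥ z)) := by
    intro r
    have h := DFunLike.congr_fun hΦΨ (Multiplicative.ofAdd (r • x))
    simpa only [Φ, Ψ, MonoidHom.coe_mk, OneHom.coe_mk, toAdd_ofAdd, Submodule.coe_smul,
      _root_.map_smul, smul_dotProduct, smul_eq_mul] using h
  -- use the generating character to upgrade the character identity to a ring identity
  let ψ : AddChar R ℂ :=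
    { toFun := fun s => χ (s * ((x : Fin n → R) ⬝ᵥ (A.val *ᵥ z)))
      map_zero_eq_one' := by simp
      map_add_eq_mul' := by
        intro a b
        simp only [add_mul, AddChar.map_add_eq_mul] }
  have huniq := hχ ψ
  have h1 : ∀ s : R, ψ s = χ (s * ((x : Fin n → R) ⬝ᵥ (A.val *ᵥ z))) := fun s => rfl
  have h2 : ∀ s : R, ψ s = χ (s * (f x ⬝ᵥ z)) := fun s => (h1 s).trans (hchar s)
  have heq : (x : Fin n → R) ⬝ᵥ (A.val *ᵥ z) = f x ⬝ᵥ z := huniq.unique h1 h2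
  rw [← heq, Matrix.dotProduct_mulVec]
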